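/- If p(z) = 1 + Σ_{k≥1} cₖ zᵏ is analytic with Re p(z) > 0 on the unit disk and p(0)=1, then for all positive integers n, m and real λ with 0 ≤ λ ≤ 1, |λ·cₙ·cₘ − c_{n+m}| ≤ 2; and for λ outside [0,1], |λ·cₙ·cₘ − c_{n+m}| ≤ 2|2λ−1|. -/

import Mathlib

/-!
Fix `0 < r < 1`. On the circle of radius `r`, `p (r e^{it}) = ∑ cⱼ rʲ e^{ijt}` has positive real
part, so `μ_r = (Re p (r e^{it}) / 2π) dt` is a probability measure on `(0, 2π]`. Writing
`Re p = (p + conj p) / 2`, the conjugate half carries only negative frequencies, so the moments are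
`∫ e^{-ikt} dμ_r = cₖ rᵏ / 2` for `k ≥ 1`.

For functions `u`, `v` of modulus at most one and any probability measure, Cauchy–Schwarz applied
to the covariance `∫ (u - ∫u)(v - ∫v)` gives `|2 ∫u ∫v - ∫uv| ≤ 1`. With `u = e^{-int}`,
`v = e^{-imt}` this reads `r^{n+m} |cₙ cₘ - c_{n+m}| ≤ 2`, while `|∫uv| ≤ 1` gives
`r^{n+m} |c_{n+m}| ≤ 2`. Let `r → 1`; then
`λ cₙ cₘ - c_{n+m} = λ (cₙ cₘ - c_{n+m}) + (λ - 1) c_{n+m}` is bounded by `2 (|λ| + |λ - 1|)`,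
which is `2` on `[0, 1]` and `2 |2λ - 1|` outside.
-/

open MeasureTheory Real Complex Filter Set Topology
open scoped ComplexConjugate

section Covariance

variable {α : Type*} [MeasurableSpace α] {μ : Measure α}

theorem integral_norm_sub_integral_sq {E : Type*} [NormedAddCommGroup E] [InnerProductSpace ℝ E]
    [CompleteSpace E] [IsProbabilityMeasure μ] {u : α → E} (hu : MemLp u 2 μ) :
    ∫ x, ‖u x - ∫ y, u y ∂μ‖ ^ 2 ∂μ = ∫ x, ‖u x‖ ^ 2 ∂μ - ‖∫ x, u x ∂μ‖ ^ 2 := by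
  set a := ∫ x, u x ∂μ
  have hu2 : Integrable (fun x => ‖u x‖ ^ 2) μ := (memLp_two_iff_integrable_sq_norm hu.1).1 hu
  have hinner : Integrable (fun x => 2 * inner ℝ a (u x)) μ :=
    ((hu.integrable one_le_two).const_inner a).const_mul 2
  have hdiff : Integrable (fun x => ‖u x‖ ^ 2 - 2 * inner ℝ a (u x)) μ := hu2.sub hinner
  simp_rw [norm_sub_sq_real, real_inner_comm a]
  rw [integral_add hdiff (integrable_const _), integral_sub hu2 hinner, integral_const_mul,
    integral_inner (hu.integrable one_le_two), integral_const, real_inner_self_eq_norm_sq]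
  simp only [probReal_univ, smul_eq_mul, one_mul]
  ring

theorem sq_norm_integral_mul_le {𝕜 : Type*} [RCLike 𝕜] {f g : α → 𝕜} (hf : MemLp f 2 μ)
    (hg : MemLp g 2 μ) :
    ‖∫ x, f x * g x ∂μ‖ ^ 2 ≤ (∫ x, ‖f x‖ ^ 2 ∂μ) * ∫ x, ‖g x‖ ^ 2 ∂μ := by
  have holder := integral_mul_norm_le_Lp_mul_Lq Real.HolderConjugate.two_two
    (by simpa using hf) (by simpa using hg)
  simp only [Real.rpow_two, ← Real.sqrt_eq_rpow] at holder
  calc ‖∫ x, f x * g x ∂μ‖ ^ 2 ≤ (∫ x, ‖f x‖ * ‖g x‖ ∂μ) ^ 2 := by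
        gcongr
        simpa only [norm_mul] using norm_integral_le_integral_norm (fun x => f x * g x)
    _ ≤ (√(∫ x, ‖f x‖ ^ 2 ∂μ) * √(∫ x, ‖g x‖ ^ 2 ∂μ)) ^ 2 := by
        gcongr
    _ = _ := by
        rw [mul_pow, sq_sqrt (integral_nonneg fun x => by positivity),
          sq_sqrt (integral_nonneg fun x => by positivity)]

theorem mul_add_le_one_of_sq_le {x y z : ℝ} (hx0 : 0 ≤ x) (hx : x ≤ 1) (hy : y ≤ 1) (hz : 0 ≤ z)
    (h : z ^ 2 ≤ (1 - x ^ 2) * (1 - y ^ 2)) : x * y + z ≤ 1 := by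
  have hxy : 0 ≤ 1 - x * y := by nlinarith
  have : z ^ 2 ≤ (1 - x * y) ^ 2 := h.trans (by nlinarith [sq_nonneg (x - y)])
  linarith [(pow_le_pow_iff_left₀ hz hxy two_ne_zero).1 this]

theorem norm_two_mul_integral_mul_integral_sub_integral_mul_le_one [IsProbabilityMeasure μ]
    {u v : α → ℂ} (hu : AEStronglyMeasurable u μ) (hv : AEStronglyMeasurable v μ)
    (hu1 : ∀ x, ‖u x‖ ≤ 1) (hv1 : ∀ x, ‖v x‖ ≤ 1) :
    ‖2 * (∫ x, u x ∂μ) * (∫ x, v x ∂μ) - ∫ x, u x * v x ∂μ‖ ≤ 1 := by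
  set a := ∫ x, u x ∂μ
  set b := ∫ x, v x ∂μ
  have hu2 : MemLp u 2 μ := .of_bound hu 1 (.of_forall hu1)
  have hv2 : MemLp v 2 μ := .of_bound hv 1 (.of_forall hv1)
  have hvar {w : α → ℂ} (hw : MemLp w 2 μ) (hw1 : ∀ x, ‖w x‖ ≤ 1) :
      ∫ x, ‖w x - ∫ y, w y ∂μ‖ ^ 2 ∂μ ≤ 1 - ‖∫ x, w x ∂μ‖ ^ 2 := by
    rw [integral_norm_sub_integral_sq hw]
    gcongr
    calc ∫ x, ‖w x‖ ^ 2 ∂μ ≤ ∫ _, (1 : ℝ) ∂μ :=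
          integral_mono ((memLp_two_iff_integrable_sq_norm hw.1).1 hw) (integrable_const 1)
            fun x => pow_le_one₀ (norm_nonneg _) (hw1 x)
      _ = 1 := by simp
  have hcov : ∫ x, (u x - a) * (v x - b) ∂μ = (∫ x, u x * v x ∂μ) - a * b := by
    have huv : Integrable (fun x => u x * v x) μ :=
      .of_bound (hu.mul hv) 1 (.of_forall fun x => by
        simpa [norm_mul] using mul_le_one₀ (hu1 x) (norm_nonneg _) (hv1 x))
    have hu' := hu2.integrable one_le_two
    have hv' := hv2.integrable one_le_two
    have h1 : Integrable (fun x => u x * v x - u x * b) μ := huv.sub (hu'.mul_const _)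
    have h2 : Integrable (fun x => a * v x - a * b) μ := (hv'.const_mul _).sub (integrable_const _)
    simp_rw [sub_mul, mul_sub]
    rw [integral_sub h1 h2, integral_sub huv (hu'.mul_const _),
      integral_sub (hv'.const_mul _) (integrable_const _),
      integral_const_mul, integral_mul_const, integral_const]
    simp only [probReal_univ, one_smul]
    ring
  have ha : ‖a‖ ≤ 1 := by simpa using norm_integral_le_of_norm_le_const (.of_forall hu1) (μ := μ)
  have hb : ‖b‖ ≤ 1 := by simpa using norm_integral_le_of_norm_le_const (.of_forall hv1) (μ := μ)
  have hcs : ‖(∫ x, u x * v x ∂μ) - a * b‖ ^ 2 ≤ (1 - ‖a‖ ^ 2) * (1 - ‖b‖ ^ 2) := by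
    rw [← hcov]
    refine (sq_norm_integral_mul_le (hu2.sub (memLp_const a)) (hv2.sub (memLp_const b))).trans ?_
    gcongr
    · exact sub_nonneg.2 (pow_le_one₀ (norm_nonneg a) ha)
    · exact hvar hu2 hu1
    · exact hvar hv2 hv1
  calc ‖2 * a * b - ∫ x, u x * v x ∂μ‖ = ‖a * b - ((∫ x, u x * v x ∂μ) - a * b)‖ := by ring_nf
    _ ≤ ‖a‖ * ‖b‖ + ‖(∫ x, u x * v x ∂μ) - a * b‖ := by
        rw [← norm_mul]; exact norm_sub_le _ _
    _ ≤ 1 := mul_add_le_one_of_sq_le (norm_nonneg a) ha hb (norm_nonneg _) hcs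

end Covariance

theorem integral_exp_int_mul_mul_I (k : ℤ) :
    ∫ t in (0 : ℝ)..2 * π, exp (k * t * I) = if k = 0 then 2 * (π : ℂ) else 0 := by
  split_ifs with hk
  · simp [hk]
  · have hkI : (k : ℂ) * I ≠ 0 := by simpa using hk
    simp_rw [mul_right_comm _ _ I]
    rw [integral_exp_mul_complex hkI]
    have : (k : ℂ) * I * (2 * π) = k * (2 * π * I) := by ring
    simp [this, exp_int_mul_two_pi_mul_I]

section TrigonometricSeries

variable {a : ℕ → ℂ} {f : ℝ → ℂ}

theorem continuous_of_hasSum_exp (ha : Summable fun j => ‖a j‖)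
    (hf : ∀ t : ℝ, HasSum (fun j => a j * exp (j * t * I)) (f t)) : Continuous f := by
  have hcont : Continuous fun t : ℝ => ∑' j, a j * exp (j * t * I) :=
    continuous_tsum (fun j => by fun_prop) ha fun j t => by simp [Complex.norm_exp]
  exact hcont.congr fun t => (hf t).tsum_eq

theorem hasSum_integral_mul_exp (ha : Summable fun j => ‖a j‖)
    (hf : ∀ t : ℝ, HasSum (fun j => a j * exp (j * t * I)) (f t)) (k : ℤ) :
    HasSum (fun j : ℕ => a j * ∫ t in (0 : ℝ)..2 * π, exp (((j + k : ℤ) : ℂ) * t * I))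
      (∫ t in (0 : ℝ)..2 * π, f t * exp (k * t * I)) := by
  have hterm (j : ℕ) (t : ℝ) :
      a j * exp (j * t * I) * exp (k * t * I) = a j * exp (((j + k : ℤ) : ℂ) * t * I) := by
    rw [mul_assoc, ← Complex.exp_add]; push_cast; ring_nf
  simp_rw [← intervalIntegral.integral_const_mul, ← hterm]
  refine intervalIntegral.hasSum_integral_of_dominated_convergence (fun j _ => ‖a j‖)
    (fun j => (by fun_prop : Continuous _).aestronglyMeasurable) (fun j => .of_forall fun t _ => ?_)
    (.of_forall fun _ _ => ha) intervalIntegrable_const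
    (.of_forall fun t _ => (hf t).mul_right _)
  simp [Complex.norm_exp]

theorem integral_mul_exp_neg_of_hasSum (ha : Summable fun j => ‖a j‖)
    (hf : ∀ t : ℝ, HasSum (fun j => a j * exp (j * t * I)) (f t)) (n : ℕ) :
    ∫ t in (0 : ℝ)..2 * π, f t * exp (-(n * t * I)) = 2 * π * a n := by
  have h := hasSum_integral_mul_exp ha hf (-n)
  simp only [integral_exp_int_mul_mul_I, Int.cast_neg, Int.cast_natCast, neg_mul] at h
  rw [← h.tsum_eq, tsum_eq_single n fun j hj => by rw [if_neg (by omega), mul_zero]]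
  simp [mul_comm]

theorem integral_mul_exp_of_hasSum (ha : Summable fun j => ‖a j‖)
    (hf : ∀ t : ℝ, HasSum (fun j => a j * exp (j * t * I)) (f t)) {n : ℕ} (hn : n ≠ 0) :
    ∫ t in (0 : ℝ)..2 * π, f t * exp (n * t * I) = 0 := by
  have h := hasSum_integral_mul_exp ha hf n
  have h0 (j : ℕ) : (j : ℤ) + n ≠ 0 := by omega
  simp only [integral_exp_int_mul_mul_I, h0, if_false, mul_zero, Int.cast_natCast] at h
  exact h.unique hasSum_zero

theorem integral_re_mul_exp_neg_of_hasSum (ha : Summable fun j => ‖a j‖)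
    (hf : ∀ t : ℝ, HasSum (fun j => a j * exp (j * t * I)) (f t)) {n : ℕ} (hn : n ≠ 0) :
    ∫ t in (0 : ℝ)..2 * π, ((f t).re : ℂ) * exp (-(n * t * I)) = π * a n := by
  have hcont := continuous_of_hasSum_exp ha hf
  have hpt (t : ℝ) : ((f t).re : ℂ) * exp (-(n * t * I)) =
      (f t * exp (-(n * t * I)) + conj (f t * exp (n * t * I))) / 2 := by
    rw [re_eq_add_conj, map_mul, ← exp_conj]
    simp only [map_mul, conj_natCast, conj_ofReal, conj_I]
    ring_nf
  have h1 : IntervalIntegrable (fun t : ℝ => f t * exp (-(n * t * I))) volume 0 (2 * π) :=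
    (hcont.mul (by fun_prop)).intervalIntegrable _ _
  have h2 : IntervalIntegrable (fun t : ℝ => conj (f t * exp (n * t * I))) volume 0 (2 * π) :=
    (continuous_conj.comp (hcont.mul (by fun_prop))).intervalIntegrable _ _
  simp_rw [hpt]
  rw [intervalIntegral.integral_div, intervalIntegral.integral_add h1 h2,
    intervalIntegral.intervalIntegral_conj, integral_mul_exp_neg_of_hasSum ha hf,
    integral_mul_exp_of_hasSum ha hf hn]
  simp only [map_zero, add_zero]
  ring

theorem integral_re_of_hasSum (ha : Summable fun j => ‖a j‖)
    (hf : ∀ t : ℝ, HasSum (fun j => a j * exp (j * t * I)) (f t)) :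
    ∫ t in (0 : ℝ)..2 * π, (f t).re = 2 * π * (a 0).re := by
  have h := integral_mul_exp_neg_of_hasSum ha hf 0
  simp only [Nat.cast_zero, zero_mul, neg_zero, Complex.exp_zero, mul_one] at h
  change ∫ t in (0 : ℝ)..2 * π, RCLike.re (f t) = _
  rw [intervalIntegral.intervalIntegral_re
    ((continuous_of_hasSum_exp ha hf).intervalIntegrable _ _)]
  simp [h]

/-- For `f t = p (r * exp (t * I))` this is the Herglotz measure of `z ↦ p (r * z)`, carried to
`(0, 2π]` by `t ↦ exp (t * I)`. -/
noncomputable def herglotzMeasure (f : ℝ → ℂ) : Measure ℝ :=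
  (volume.restrict (Ioc 0 (2 * π))).withDensity fun t => ENNReal.ofReal ((f t).re / (2 * π))

theorem integral_herglotzMeasure (hf : Continuous f) (hre : ∀ t, 0 ≤ (f t).re) (g : ℝ → ℂ) :
    ∫ t, g t ∂herglotzMeasure f = ∫ t in (0 : ℝ)..2 * π, ((f t).re / (2 * π)) • g t := by
  rw [herglotzMeasure, integral_withDensity_eq_integral_toReal_smul (by fun_prop)
    (.of_forall fun _ => ENNReal.ofReal_lt_top), intervalIntegral.integral_of_le two_pi_pos.le]
  simp_rw [ENNReal.toReal_ofReal (div_nonneg (hre _) two_pi_pos.le)]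

theorem isProbabilityMeasure_herglotzMeasure (ha : Summable fun j => ‖a j‖)
    (hf : ∀ t : ℝ, HasSum (fun j => a j * exp (j * t * I)) (f t)) (ha0 : (a 0).re = 1)
    (hre : ∀ t, 0 ≤ (f t).re) : IsProbabilityMeasure (herglotzMeasure f) := by
  have hcont := continuous_of_hasSum_exp ha hf
  constructor
  rw [herglotzMeasure, withDensity_apply _ MeasurableSet.univ, Measure.restrict_univ,
    ← ofReal_integral_eq_lintegral_ofReal
      (by fun_prop : Continuous fun t => (f t).re / (2 * π)).integrableOn_Ioc
      (.of_forall fun t => div_nonneg (hre t) two_pi_pos.le),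
    ← intervalIntegral.integral_of_le two_pi_pos.le, intervalIntegral.integral_div,
    integral_re_of_hasSum ha hf, ha0, mul_one, div_self two_pi_pos.ne', ENNReal.ofReal_one]

theorem integral_exp_neg_herglotzMeasure (ha : Summable fun j => ‖a j‖)
    (hf : ∀ t : ℝ, HasSum (fun j => a j * exp (j * t * I)) (f t)) (hre : ∀ t, 0 ≤ (f t).re)
    {n : ℕ} (hn : n ≠ 0) : ∫ t, exp (-(n * t * I)) ∂herglotzMeasure f = a n / 2 := by
  rw [integral_herglotzMeasure (continuous_of_hasSum_exp ha hf) hre]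
  simp_rw [Complex.real_smul, ofReal_div, div_mul_eq_mul_div]
  rw [intervalIntegral.integral_div, integral_re_mul_exp_neg_of_hasSum ha hf hn]
  push_cast
  field_simp

theorem norm_le_two_of_hasSum (ha : Summable fun j => ‖a j‖)
    (hf : ∀ t : ℝ, HasSum (fun j => a j * exp (j * t * I)) (f t)) (ha0 : (a 0).re = 1)
    (hre : ∀ t, 0 ≤ (f t).re) {n : ℕ} (hn : n ≠ 0) : ‖a n‖ ≤ 2 := by
  have := isProbabilityMeasure_herglotzMeasure ha hf ha0 hre
  have h := norm_integral_le_of_norm_le_const (μ := herglotzMeasure f) (C := 1)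
    (f := fun t : ℝ => exp (-(n * t * I))) (.of_forall fun t => by simp [Complex.norm_exp])
  rw [integral_exp_neg_herglotzMeasure ha hf hre hn, norm_div] at h
  simp only [Complex.norm_ofNat, probReal_univ, mul_one] at h
  linarith

theorem norm_mul_sub_le_two_of_hasSum (ha : Summable fun j => ‖a j‖)
    (hf : ∀ t : ℝ, HasSum (fun j => a j * exp (j * t * I)) (f t)) (ha0 : (a 0).re = 1)
    (hre : ∀ t, 0 ≤ (f t).re) {n m : ℕ} (hn : n ≠ 0) (hm : m ≠ 0) :
    ‖a n * a m - a (n + m)‖ ≤ 2 := by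
  have := isProbabilityMeasure_herglotzMeasure ha hf ha0 hre
  have h := norm_two_mul_integral_mul_integral_sub_integral_mul_le_one (μ := herglotzMeasure f)
    (u := fun t : ℝ => exp (-(n * t * I))) (v := fun t : ℝ => exp (-(m * t * I)))
    (by fun_prop) (by fun_prop) (fun t => by simp [Complex.norm_exp])
    (fun t => by simp [Complex.norm_exp])
  have hprod (t : ℝ) : exp (-(n * t * I)) * exp (-(m * t * I)) = exp (-((n + m : ℕ) * t * I)) := by
    rw [← Complex.exp_add]; push_cast; ring_nf
  simp_rw [hprod, integral_exp_neg_herglotzMeasure ha hf hre hn,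
    integral_exp_neg_herglotzMeasure ha hf hre hm,
    integral_exp_neg_herglotzMeasure ha hf hre (show n + m ≠ 0 by omega)] at h
  have : a n * a m - a (n + m) = 2 * (2 * (a n / 2) * (a m / 2) - a (n + m) / 2) := by ring
  rw [this, norm_mul, Complex.norm_ofNat]
  linarith

end TrigonometricSeries

theorem summable_norm_mul_pow_of_summable {c : ℕ → ℂ} {w z : ℂ}
    (hw : Summable fun k => c k * w ^ k) (hz : ‖z‖ < ‖w‖) : Summable fun k => ‖c k * z ^ k‖ := by
  have hw0 : w ≠ 0 := by rintro rfl; simp only [norm_zero] at hz; linarith [norm_nonneg z]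
  have hO : (fun k => c k * w ^ k) =O[atTop] fun k => ((k ^ 0 : ℕ) : ℂ) := by
    simpa using hw.tendsto_atTop_zero.isBigO_one ℂ
  have h := summable_norm_mul_geometric_of_norm_lt_one' (r := z / w)
    (by rwa [norm_div, div_lt_one (norm_pos_iff.2 hw0)]) hO
  simpa [mul_assoc, ← mul_pow, mul_div_cancel₀ _ hw0] using h

theorem le_of_forall_pow_mul_le {x C : ℝ} (k : ℕ) (h : ∀ r ∈ Ioo (0 : ℝ) 1, r ^ k * x ≤ C) :
    x ≤ C := by
  have ht : Tendsto (fun r : ℝ => r ^ k * x) (𝓝[<] 1) (𝓝 x) := by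
    refine ((by fun_prop : Continuous fun r : ℝ => r ^ k * x).tendsto' 1 x ?_).mono_left
      nhdsWithin_le_nhds
    simp
  exact le_of_tendsto ht (eventually_of_mem (Ioo_mem_nhdsLT zero_lt_one) h)

theorem norm_ofReal_mul_sub_le {X Y : ℂ} {C : ℝ} (hXY : ‖X - Y‖ ≤ C) (hY : ‖Y‖ ≤ C) (lam : ℝ) :
    ‖lam * X - Y‖ ≤ (|lam| + |lam - 1|) * C := by
  calc ‖lam * X - Y‖ = ‖lam * (X - Y) + ((lam - 1 : ℝ) : ℂ) * Y‖ := by push_cast; ring_nf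
    _ ≤ |lam| * ‖X - Y‖ + |lam - 1| * ‖Y‖ := by
        refine (norm_add_le _ _).trans ?_
        rw [norm_mul, norm_mul, norm_real, norm_real, Real.norm_eq_abs, Real.norm_eq_abs]
    _ ≤ (|lam| + |lam - 1|) * C := by
        rw [add_mul]; gcongr

section Caratheodory

variable {p : ℂ → ℂ} {c : ℕ → ℂ}

theorem ofReal_mul_exp_mem_ball {r : ℝ} (hr : r ∈ Ioo (0 : ℝ) 1) (t : ℝ) :
    (r : ℂ) * exp (t * I) ∈ Metric.ball (0 : ℂ) 1 := by
  rw [mem_ball_zero_iff, norm_mul, norm_exp_ofReal_mul_I, mul_one, Complex.norm_of_nonneg hr.1.le]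
  exact hr.2

theorem hasSum_mul_exp_of_hasSum_mul_pow
    (hsum : ∀ z ∈ Metric.ball (0 : ℂ) 1, HasSum (fun k => c k * z ^ k) (p z))
    {r : ℝ} (hr : r ∈ Ioo (0 : ℝ) 1) (t : ℝ) :
    HasSum (fun j => c j * (r : ℂ) ^ j * exp (j * t * I)) (p (r * exp (t * I))) := by
  convert hsum _ (ofReal_mul_exp_mem_ball hr t) using 2 with j
  rw [mul_pow, ← Complex.exp_nat_mul]
  ring_nf

theorem summable_norm_mul_pow_of_hasSum_mul_pow
    (hsum : ∀ z ∈ Metric.ball (0 : ℂ) 1, HasSum (fun k => c k * z ^ k) (p z))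
    {r : ℝ} (hr : r ∈ Ioo (0 : ℝ) 1) : Summable fun j => ‖c j * (r : ℂ) ^ j‖ := by
  have hw : (((1 + r) / 2 : ℝ) : ℂ) ∈ Metric.ball (0 : ℂ) 1 := by
    rw [mem_ball_zero_iff, Complex.norm_of_nonneg (by linarith [hr.1])]
    linarith [hr.2]
  refine summable_norm_mul_pow_of_summable (hsum _ hw).summable ?_
  rw [Complex.norm_of_nonneg hr.1.le, Complex.norm_of_nonneg (by linarith [hr.1])]
  linarith [hr.2]

theorem norm_coeff_le_two (hc0 : c 0 = 1)
    (hsum : ∀ z ∈ Metric.ball (0 : ℂ) 1, HasSum (fun k => c k * z ^ k) (p z))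
    (hre : ∀ z ∈ Metric.ball (0 : ℂ) 1, 0 < (p z).re) {n : ℕ} (hn : n ≠ 0) : ‖c n‖ ≤ 2 := by
  refine le_of_forall_pow_mul_le n fun r hr => ?_
  have h := norm_le_two_of_hasSum (summable_norm_mul_pow_of_hasSum_mul_pow hsum hr)
    (hasSum_mul_exp_of_hasSum_mul_pow hsum hr) (by simp [hc0])
    (fun t => (hre _ (ofReal_mul_exp_mem_ball hr t)).le) hn
  rwa [norm_mul, norm_pow, Complex.norm_of_nonneg hr.1.le, mul_comm] at h

theorem norm_coeff_mul_sub_le_two (hc0 : c 0 = 1)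
    (hsum : ∀ z ∈ Metric.ball (0 : ℂ) 1, HasSum (fun k => c k * z ^ k) (p z))
    (hre : ∀ z ∈ Metric.ball (0 : ℂ) 1, 0 < (p z).re) {n m : ℕ} (hn : n ≠ 0) (hm : m ≠ 0) :
    ‖c n * c m - c (n + m)‖ ≤ 2 := by
  refine le_of_forall_pow_mul_le (n + m) fun r hr => ?_
  have h := norm_mul_sub_le_two_of_hasSum (summable_norm_mul_pow_of_hasSum_mul_pow hsum hr)
    (hasSum_mul_exp_of_hasSum_mul_pow hsum hr) (by simp [hc0])
    (fun t => (hre _ (ofReal_mul_exp_mem_ball hr t)).le) hn hm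
  have hfactor : c n * (r : ℂ) ^ n * (c m * (r : ℂ) ^ m) - c (n + m) * (r : ℂ) ^ (n + m) =
      (r : ℂ) ^ (n + m) * (c n * c m - c (n + m)) := by ring
  rwa [hfactor, norm_mul, norm_pow, Complex.norm_of_nonneg hr.1.le] at h

end Caratheodory

theorem stmt_8 (p : ℂ → ℂ) (c : ℕ → ℂ) (hc0 : c 0 = 1)
    (hsum : ∀ z ∈ Metric.ball (0:ℂ) 1, HasSum (fun k => c k * z ^ k) (p z))
    (hre : ∀ z ∈ Metric.ball (0:ℂ) 1, 0 < (p z).re) :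
    ∀ n m : ℕ, 1 ≤ n → 1 ≤ m → ∀ lam : ℝ,
      ((0 ≤ lam ∧ lam ≤ 1) → ‖(lam * c n * c m - c (n + m) : ℂ)‖ ≤ 2)
        ∧ ((lam < 0 ∨ 1 < lam) →
            ‖(lam * c n * c m - c (n + m) : ℂ)‖ ≤ 2 * |2*lam - 1|) := by
  intro n m hn hm lam
  have h := norm_ofReal_mul_sub_le (norm_coeff_mul_sub_le_two hc0 hsum hre (by omega) (by omega))
    (norm_coeff_le_two hc0 hsum hre (show n + m ≠ 0 by omega)) lam
  rw [← mul_assoc] at h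
  refine ⟨fun ⟨h0, h1⟩ => ?_, fun hlam => ?_⟩
  · rw [abs_of_nonneg h0, abs_of_nonpos (by linarith)] at h
    linarith
  · have habs : |lam| + |lam - 1| = |2 * lam - 1| := by
      rcases hlam with hlam | hlam
      · rw [abs_of_neg hlam, abs_of_neg (by linarith), abs_of_neg (by linarith)]; ring
      · rw [abs_of_pos (by linarith), abs_of_pos (by linarith), abs_of_pos (by linarith)]; ring
    rw [habs] at h
    linarith
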